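/- arXiv:1908.11496 — 3 statements merged into one kernel-verified Lean document; each statement's English description precedes it below -/
import Mathlib

section
/- Let $k$ be a field of characteristic $p$, let $C_p$ be the cyclic group of order $p$ with generator $\zeta$, and let $\tau = \sum_{g \in C_p} g \in k[C_p]$ be the trace element. Let $f : k[C_p] \to k$ be a $k$-linear map. Then the $k$-linear map $k[C_p] \to \prod_{g \in C_p} k$ whose $g$-component sends $v$ to $f(g \cdot v)$ is an isomorphism if and only if $f(\tau) \neq 0$. -/
/-!
The kernel of `v ↦ (g ↦ f (g * v))` is the largest left ideal of `k[G]` contained in `ker f`.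
For `G` cyclic of `p`-power order with generator `ζ`, `ζ - 1` is nilpotent in `k[G]`, so every
nonzero left ideal contains a nonzero element killed by `ζ - 1`; such an element is fixed by
all of `G`, hence a multiple of `τ`. Thus the kernel vanishes iff `f τ ≠ 0`, and injectivity
suffices by counting dimensions.
-/

theorem exists_pow_mul_ne_zero_and_mul_pow_mul_eq_zero {R : Type*} [MonoidWithZero R]
    {u v : R} {N : ℕ} (hN : u ^ N * v = 0) (hv : v ≠ 0) :
    ∃ m, u ^ m * v ≠ 0 ∧ u * (u ^ m * v) = 0 := by
  induction N with
  | zero => simp_all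
  | succ N ih =>
    by_cases h : u ^ N * v = 0
    · exact ih h
    · exact ⟨N, h, by rwa [← mul_assoc, ← pow_succ']⟩

namespace MonoidAlgebra

variable {k G : Type*}

section Semiring

variable [Semiring k]

variable (k G) in
noncomputable def traceElement [Fintype G] : MonoidAlgebra k G := ∑ g : G, single g 1

theorem coeff_traceElement [Fintype G] (g : G) : (traceElement k G).coeff g = 1 := by
  simp [traceElement, coeff_sum, coeff_single]

variable [Group G]

theorem traceElement_ne_zero [Fintype G] [Nontrivial k] : traceElement k G ≠ 0 := by
  intro h
  simpa [h] using coeff_traceElement (k := k) (1 : G)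

theorem single_one_mul_traceElement [Fintype G] (g : G) :
    single g (1 : k) * traceElement k G = traceElement k G := by
  rw [traceElement, Finset.mul_sum]
  exact Fintype.sum_equiv (Equiv.mulLeft g) _ _ fun h => by rw [single_mul_single, one_mul]; rfl

theorem eq_coeff_one_smul_traceElement [Fintype G] {w : MonoidAlgebra k G}
    (hw : ∀ g : G, single g (1 : k) * w = w) : w = w.coeff 1 • traceElement k G := by
  ext g
  rw [coeff_smul_apply, coeff_traceElement, smul_eq_mul, mul_one, ← hw g,
    coeff_single_mul_apply, one_mul, inv_mul_cancel, hw g]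

theorem single_mul_eq_of_single_generator_mul_eq [Finite G] {ζ : G}
    (hζ : ∀ g, g ∈ Subgroup.zpowers ζ) {w : MonoidAlgebra k G} (hw : single ζ (1 : k) * w = w)
    (g : G) : single g (1 : k) * w = w := by
  obtain ⟨n, rfl⟩ := mem_powers_iff_mem_zpowers.mpr (hζ g)
  beta_reduce
  induction n with
  | zero => rw [pow_zero, ← one_def, one_mul]
  | succ n ih => rw [pow_succ', ← mul_one (1 : k), ← single_mul_single, mul_assoc, ih, hw]

end Semiring

theorem single_sub_one_pow_card_eq_zero [Ring k] {p n : ℕ} [ExpChar k p] [Group G] [Finite G]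
    (hG : Nat.card G = p ^ n) (ζ : G) : (single ζ (1 : k) - 1) ^ Nat.card G = 0 := by
  have : ExpChar (MonoidAlgebra k G) p :=
    expChar_of_injective_ringHom (f := singleOneRingHom) single_right_injective p
  rw [hG, sub_pow_expChar_pow_of_commute _ _ (Commute.one_right _), one_pow, single_pow, one_pow,
    ← hG, pow_card_eq_one', ← one_def, sub_self]

variable [Field k] {p n : ℕ} [ExpChar k p] [Group G]

theorem exists_mul_eq_traceElement [Fintype G] (hG : Nat.card G = p ^ n) {ζ : G}
    (hζ : ∀ g, g ∈ Subgroup.zpowers ζ) {v : MonoidAlgebra k G} (hv : v ≠ 0) :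
    ∃ a, a * v = traceElement k G := by
  set u := single ζ (1 : k) - 1
  have hnil : u ^ Nat.card G * v = 0 := by rw [single_sub_one_pow_card_eq_zero hG ζ, zero_mul]
  obtain ⟨m, hw, huw⟩ := exists_pow_mul_ne_zero_and_mul_pow_mul_eq_zero hnil hv
  set w := u ^ m * v
  have hζw : single ζ 1 * w = w := by rwa [sub_mul, one_mul, sub_eq_zero] at huw
  obtain ⟨c, hwc⟩ : ∃ c : k, w = c • traceElement k G :=
    ⟨_, eq_coeff_one_smul_traceElement (single_mul_eq_of_single_generator_mul_eq hζ hζw)⟩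
  have hc : c ≠ 0 := fun hc => hw (by rw [hwc, hc, zero_smul])
  refine ⟨c⁻¹ • u ^ m, ?_⟩
  rw [smul_mul_assoc]
  change c⁻¹ • w = _
  rw [hwc, smul_smul, inv_mul_cancel₀ hc, one_smul]

variable (G) in
noncomputable def translatesMap (f : MonoidAlgebra k G →ₗ[k] k) :
    MonoidAlgebra k G →ₗ[k] (G → k) :=
  LinearMap.pi fun g => f ∘ₗ LinearMap.mulLeft k (single g 1)

theorem map_mul_eq_zero_of_translatesMap_eq_zero {f : MonoidAlgebra k G →ₗ[k] k}
    {v : MonoidAlgebra k G} (hv : translatesMap G f v = 0) (a : MonoidAlgebra k G) :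
    f (a * v) = 0 := by
  induction a using MonoidAlgebra.induction_on with
  | of g => exact congrFun hv g
  | add a b ha hb => rw [add_mul, map_add, ha, hb, add_zero]
  | smul r a ha => rw [smul_mul_assoc, map_smul, ha, smul_zero]

theorem injective_translatesMap_iff [Fintype G] [IsCyclic G] (hG : Nat.card G = p ^ n)
    (f : MonoidAlgebra k G →ₗ[k] k) :
    Function.Injective (translatesMap G f) ↔ f (traceElement k G) ≠ 0 := by
  refine ⟨fun hinj hf => traceElement_ne_zero (hinj ?_), fun hf => ?_⟩
  · ext g
    simp [translatesMap, single_one_mul_traceElement, hf]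
  · obtain ⟨ζ, hζ⟩ := IsCyclic.exists_generator (α := G)
    rw [← LinearMap.ker_eq_bot, LinearMap.ker_eq_bot']
    intro v hv
    by_contra hv0
    obtain ⟨a, ha⟩ := exists_mul_eq_traceElement hG hζ hv0
    exact hf (ha ▸ map_mul_eq_zero_of_translatesMap_eq_zero hv a)

theorem bijective_translatesMap_iff [Fintype G] [IsCyclic G] (hG : Nat.card G = p ^ n)
    (f : MonoidAlgebra k G →ₗ[k] k) :
    Function.Bijective (translatesMap G f) ↔ f (traceElement k G) ≠ 0 := by
  have hrank : Module.finrank k (MonoidAlgebra k G) = Module.finrank k (G → k) := by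
    rw [Module.finrank_eq_card_basis (basis G k), Module.finrank_fintype_fun_eq_card]
  rw [← injective_translatesMap_iff hG, Function.Bijective,
    ← LinearMap.injective_iff_surjective_of_finrank_eq_finrank hrank, and_self]

end MonoidAlgebra

open MonoidAlgebra

/-- For `k` a field of characteristic `p`, `f : k[C_p] → k` a `k`-linear map,
the map `k[C_p] → ∏_{g ∈ C_p} k` with `g`-component `v ↦ f(g ⋅ v)` is an isomorphism
iff `f(τ) ≠ 0`, where `τ = ∑_{g ∈ C_p} g` is the trace element. -/
theorem stmt0 (p : ℕ) [Fact p.Prime] (k : Type*) [Field k] [CharP k p]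
    (f : MonoidAlgebra k (Multiplicative (ZMod p)) →ₗ[k] k) :
    Function.Bijective
        (fun v : MonoidAlgebra k (Multiplicative (ZMod p)) =>
          fun g : Multiplicative (ZMod p) => f (MonoidAlgebra.single g 1 * v)) ↔
      f (∑ g : Multiplicative (ZMod p), MonoidAlgebra.single g 1) ≠ 0 :=
  bijective_translatesMap_iff (p := p) (n := 1) (by simp [Nat.card_eq_fintype_card]) f
end

section
/- Let $k$ be a field of characteristic $p$ and for $1 \le l \le p$ let $V_l$ denote the indecomposable $k[C_p]$-module of dimension $l$. Then for $1 < l < p$ there is an isomorphism of $k[C_p]$-modules $V_2 \otimes_k V_l \cong V_{l-1} \oplus V_{l+1}$, where $C_p$ acts diagonally on the tensor product. -/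
/-- `ρ` is (isomorphic to) the indecomposable `k[C_p]`-module `V_l` of dimension `l`:
`dim V = l` and the generator acts by a single size-`l` Jordan block of eigenvalue 1. -/
def IsIndecCpRep (p : ℕ) (k : Type) [Field k] (l : ℕ)
    (V : Type) [AddCommGroup V] [Module k V]
    (ρ : Representation k (Multiplicative (ZMod p)) V) : Prop :=
  Module.finrank k V = l ∧
    ((ρ (Multiplicative.ofAdd (1 : ZMod p)) : V →ₗ[k] V) - 1) ^ (l - 1) ≠ 0 ∧
    ((ρ (Multiplicative.ofAdd (1 : ZMod p)) : V →ₗ[k] V) - 1) ^ l = 0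

/-! Let `g` be the generator of `C_p`, `N = g - 1` on each module, and `T = g ⊗ g - 1` on
`V₂ ⊗ V_l`. Choose cyclic vectors `v ∈ V₂`, `w ∈ V_l`, put `y = Nv ⊗ w`, `b = v ⊗ w` and
`a = T b - l y - T y`. A direct computation gives `T^{l+1} b = 0` and `T^{l-1} a = 0`, so
sending cyclic generators of `V_{l-1}` and `V_{l+1}` to `a` and `b` defines a `T`-equivariant
map `V_{l-1} ⊕ V_{l+1} → V₂ ⊗ V_l`. Its image is `T`-stable and contains `(l + T) y = T b - a`;
since `l` is a unit of `k` (as `0 < l < p`) and `T` is nilpotent, it contains `y`, hence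
`Nv ⊗ V_l`, hence `v ⊗ V_l`: the map is onto, and an isomorphism because both sides have
dimension `2l`. Commuting with `g`, it commutes with all of `C_p`. -/

open Module TensorProduct

namespace Module.End

variable {K V X : Type*} [Field K] [AddCommGroup V] [Module K V] [AddCommGroup X] [Module K X]

def IsNilpotentJordanBlock (N : Module.End K V) (l : ℕ) : Prop :=
  finrank K V = l ∧ N ^ (l - 1) ≠ 0 ∧ N ^ l = 0

theorem linearIndependent_pow_apply {N : Module.End K V} {x : V} {n : ℕ}
    (hx : (N ^ (n + 1)) x = 0) (hx' : (N ^ n) x ≠ 0) :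
    LinearIndependent K fun i : Fin (n + 1) => (N ^ (i : ℕ)) x := by
  induction n generalizing x with
  | zero => simpa [linearIndependent_unique_iff] using hx'
  | succ n ih =>
    have htail : Fin.tail (fun i : Fin (n + 2) => (N ^ (i : ℕ)) x) =
        fun i : Fin (n + 1) => (N ^ (i : ℕ)) (N x) := by
      ext i; simp [Fin.tail, pow_succ]
    rw [linearIndependent_finSucc, htail]
    refine ⟨ih (by rwa [← Module.End.mul_apply, ← pow_succ])
      (by rwa [← Module.End.mul_apply, ← pow_succ]), fun hmem => hx' ?_⟩
    have hspan : Submodule.span K (Set.range fun i : Fin (n + 1) => (N ^ (i : ℕ)) (N x)) ≤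
        LinearMap.ker (N ^ (n + 1)) := by
      rw [Submodule.span_le]
      rintro _ ⟨i, rfl⟩
      rw [SetLike.mem_coe, LinearMap.mem_ker, ← Module.End.mul_apply, ← Module.End.mul_apply,
        mul_assoc, ← pow_succ, ← pow_add, show n + 1 + (i + 1) = (i : ℕ) + (n + 1 + 1) by omega,
        pow_add, Module.End.mul_apply, hx, map_zero]
    simpa using hspan (by simpa using hmem)

namespace IsNilpotentJordanBlock

variable {N : Module.End K V} {l : ℕ} (hN : N.IsNilpotentJordanBlock l)
include hN

theorem pos : 0 < l :=
  Nat.pos_of_ne_zero fun h => hN.2.1 (by simpa [h] using hN.2.2)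

theorem finiteDimensional : FiniteDimensional K V :=
  .of_finrank_pos (hN.1 ▸ hN.pos)

theorem exists_basis_pow_apply : ∃ (x : V) (b : Basis (Fin l) K V), ∀ i, b i = (N ^ (i : ℕ)) x := by
  obtain ⟨n, rfl⟩ : ∃ n, l = n + 1 := ⟨l - 1, by have := hN.pos; omega⟩
  obtain ⟨x, hx⟩ : ∃ x, (N ^ n) x ≠ 0 := by
    by_contra! h
    exact hN.2.1 (LinearMap.ext h)
  have hind := linearIndependent_pow_apply (by rw [hN.2.2, LinearMap.zero_apply]) hx
  exact ⟨x, basisOfLinearIndependentOfCardEqFinrank hind (by simp [hN.1]), fun i => by simp⟩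

theorem exists_comp_eq_comp (T : Module.End K X) {y : X} (hy : (T ^ l) y = 0) :
    ∃ (x : V) (φ : V →ₗ[K] X), φ ∘ₗ N = T ∘ₗ φ ∧ φ x = y := by
  obtain ⟨x, b, hb⟩ := hN.exists_basis_pow_apply
  set φ := b.constr K fun i => (T ^ (i : ℕ)) y
  have hφ : ∀ j, φ ((N ^ j) x) = (T ^ j) y := by
    intro j
    rcases lt_or_ge j l with hj | hj
    · rw [← hb ⟨j, hj⟩, b.constr_basis]
    · obtain ⟨m, rfl⟩ := Nat.exists_eq_add_of_le' hj
      rw [pow_add, pow_add, Module.End.mul_apply, Module.End.mul_apply, hN.2.2, hy]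
      simp
  refine ⟨x, φ, b.ext fun i => ?_, by simpa using hφ 0⟩
  simp only [LinearMap.comp_apply, hb, ← Module.End.mul_apply, ← pow_succ', hφ]

end IsNilpotentJordanBlock

end Module.End

theorem Submodule.mem_of_smul_add_apply_mem {K X : Type*} [Field K] [AddCommGroup X] [Module K X]
    {T : Module.End K X} {S : Submodule K X} (hS : ∀ x ∈ S, T x ∈ S) {c : K} (hc : c ≠ 0)
    {y : X} {n : ℕ} (hy : (T ^ n) y = 0) (h : c • y + T y ∈ S) : y ∈ S := by
  have key : ∀ m ≤ n, (T ^ m) y ∈ S := fun m hm =>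
    Nat.decreasingInduction (motive := fun m _ => (T ^ m) y ∈ S)
      (fun m _ ih => by
        have hmem := Module.End.pow_apply_mem_of_forall_mem m hS _ h
        rw [map_add, map_smul, ← Module.End.mul_apply, ← pow_succ] at hmem
        exact (S.smul_mem_iff hc).mp ((S.add_mem_iff_left ih).mp hmem))
      (by simp [hy]) hm
  simpa using key 0 n.zero_le

theorem LinearMap.comp_eq_comp_of_comp_sub_one {K V W : Type*} [Field K] [AddCommGroup V]
    [Module K V] [AddCommGroup W] [Module K W] {φ : V →ₗ[K] W} {f : Module.End K V}
    {g : Module.End K W} (h : φ ∘ₗ (f - 1) = (g - 1) ∘ₗ φ) : φ ∘ₗ f = g ∘ₗ φ := by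
  rwa [LinearMap.comp_sub, LinearMap.sub_comp, Module.End.one_eq_id, LinearMap.comp_id,
    Module.End.one_eq_id, LinearMap.id_comp, sub_left_inj] at h

namespace TensorProduct

theorem map_sub_one_tmul {K V W : Type*} [Field K] [AddCommGroup V] [Module K V]
    [AddCommGroup W] [Module K W] (f : Module.End K V) (g : Module.End K W) (x : V) (y : W) :
    (map f g - 1) (x ⊗ₜ[K] y) =
      (f - 1) x ⊗ₜ y + x ⊗ₜ (g - 1) y + (f - 1) x ⊗ₜ (g - 1) y := by
  simp only [LinearMap.sub_apply, map_tmul, Module.End.one_apply, sub_tmul, tmul_sub]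
  abel

section TensorNilpotent

variable {K V W : Type*} [Field K] [AddCommGroup V] [Module K V] [AddCommGroup W] [Module K W]
  {NV : Module.End K V} {NW : Module.End K W} {T : Module.End K (V ⊗[K] W)}
  -- `T` is `(1 + NV) ⊗ (1 + NW) - 1`, described on pure tensors
  (hT : ∀ x y, T (x ⊗ₜ y) = NV x ⊗ₜ y + x ⊗ₜ NW y + NV x ⊗ₜ NW y)
include hT

theorem apply_tmul_of_apply_eq_zero {x : V} (hx : NV x = 0) (y : W) :
    T (x ⊗ₜ y) = x ⊗ₜ NW y := by
  simp [hT, hx]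

theorem pow_apply_tmul_of_apply_eq_zero {x : V} (hx : NV x = 0) (y : W) (j : ℕ) :
    (T ^ j) (x ⊗ₜ y) = x ⊗ₜ (NW ^ j) y := by
  induction j with
  | zero => rfl
  | succ j ih =>
    rw [pow_succ', Module.End.mul_apply, ih, apply_tmul_of_apply_eq_zero hT hx,
      pow_succ', Module.End.mul_apply]

theorem pow_succ_apply_tmul {v : V} (hv : NV (NV v) = 0) (y : W) (i : ℕ) :
    (T ^ (i + 1)) (v ⊗ₜ y) = v ⊗ₜ (NW ^ (i + 1)) y +
      ((i : K) + 1) • (NV v ⊗ₜ (NW ^ i) y + NV v ⊗ₜ (NW ^ (i + 1)) y) := by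
  induction i with
  | zero =>
    rw [zero_add, pow_one, hT]
    simp only [pow_zero, pow_one, Module.End.one_apply, Nat.cast_zero, zero_add, one_smul]
    abel
  | succ i ih =>
    rw [pow_succ', Module.End.mul_apply, ih, map_add, map_smul, map_add, hT,
      apply_tmul_of_apply_eq_zero hT hv, apply_tmul_of_apply_eq_zero hT hv]
    simp only [← Module.End.mul_apply, ← pow_succ']
    push_cast
    module

section Generators

variable {v : V} {w : W} (hv : NV (NV v) = 0) {l : ℕ} (hw : (NW ^ l) w = 0)
include hv hw

theorem pow_succ_apply_tmul_eq_zero : (T ^ (l + 1)) (v ⊗ₜ w) = 0 := by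
  rw [pow_succ_apply_tmul hT hv, pow_succ', Module.End.mul_apply, hw]
  simp

theorem pow_pred_apply_eq_zero (hl : 0 < l) :
    (T ^ (l - 1)) (T (v ⊗ₜ w) - (l : K) • (NV v ⊗ₜ w) - T (NV v ⊗ₜ w)) = 0 := by
  obtain ⟨n, rfl⟩ : ∃ n, l = n + 1 := ⟨l - 1, by omega⟩
  simp only [add_tsub_cancel_right, map_sub, map_smul, ← Module.End.mul_apply, ← pow_succ,
    pow_succ_apply_tmul hT hv, pow_apply_tmul_of_apply_eq_zero hT hv, hw, tmul_zero]
  push_cast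
  module

theorem eq_top_of_apply_mem_of_mem {bV : Basis (Fin 2) K V} (hbV : ∀ i, bV i = (NV ^ (i : ℕ)) v)
    {bW : Basis (Fin l) K W} (hbW : ∀ j, bW j = (NW ^ (j : ℕ)) w) (hl : (l : K) ≠ 0)
    {S : Submodule K (V ⊗[K] W)} (hS : ∀ x ∈ S, T x ∈ S) (hb : v ⊗ₜ w ∈ S)
    (ha : T (v ⊗ₜ w) - (l : K) • (NV v ⊗ₜ w) - T (NV v ⊗ₜ w) ∈ S) : S = ⊤ := by
  have hy : NV v ⊗ₜ w ∈ S := by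
    refine S.mem_of_smul_add_apply_mem hS hl (n := l) ?_ ?_
    · rw [pow_apply_tmul_of_apply_eq_zero hT hv, hw, tmul_zero]
    · convert S.sub_mem (hS _ hb) ha using 1
      abel
  have hNV : ∀ j, NV v ⊗ₜ (NW ^ j) w ∈ S := fun j => by
    simpa only [pow_apply_tmul_of_apply_eq_zero hT hv] using
      Module.End.pow_apply_mem_of_forall_mem j hS _ hy
  have hv' : ∀ j, v ⊗ₜ (NW ^ j) w ∈ S := by
    rintro (_ | j)
    · simpa using hb
    · have hmem := Module.End.pow_apply_mem_of_forall_mem (j + 1) hS _ hb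
      rw [pow_succ_apply_tmul hT hv] at hmem
      exact (S.add_mem_iff_left (S.smul_mem _ (S.add_mem (hNV j) (hNV (j + 1))))).mp hmem
  rw [eq_top_iff, ← (bV.tensorProduct bW).span_eq, Submodule.span_le]
  rintro _ ⟨⟨i, j⟩, rfl⟩
  rw [Basis.tensorProduct_apply, hbV, hbW]
  fin_cases i
  · simpa using hv' j
  · simpa using hNV j

end Generators

theorem exists_bijective_comp_prodMap_eq {U₁ U₂ : Type*} [AddCommGroup U₁] [Module K U₁]
    [AddCommGroup U₂] [Module K U₂] {M₁ : Module.End K U₁} {M₂ : Module.End K U₂} {l : ℕ}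
    (hl : 1 < l) (hlK : (l : K) ≠ 0) (hV : NV.IsNilpotentJordanBlock 2)
    (hW : NW.IsNilpotentJordanBlock l) (h₁ : M₁.IsNilpotentJordanBlock (l - 1))
    (h₂ : M₂.IsNilpotentJordanBlock (l + 1)) :
    ∃ ψ : U₁ × U₂ →ₗ[K] V ⊗[K] W, Function.Bijective ψ ∧ ψ ∘ₗ M₁.prodMap M₂ = T ∘ₗ ψ := by
  obtain ⟨v, bV, hbV⟩ := hV.exists_basis_pow_apply
  obtain ⟨w, bW, hbW⟩ := hW.exists_basis_pow_apply
  have hv : NV (NV v) = 0 := by rw [← Module.End.mul_apply, ← sq, hV.2.2, LinearMap.zero_apply]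
  have hw : (NW ^ l) w = 0 := by rw [hW.2.2, LinearMap.zero_apply]
  obtain ⟨x₁, φ₁, hφ₁, hx₁⟩ := h₁.exists_comp_eq_comp T (pow_pred_apply_eq_zero hT hv hw (by omega))
  obtain ⟨x₂, φ₂, hφ₂, hx₂⟩ := h₂.exists_comp_eq_comp T (pow_succ_apply_tmul_eq_zero hT hv hw)
  have hψ : φ₁.coprod φ₂ ∘ₗ M₁.prodMap M₂ = T ∘ₗ φ₁.coprod φ₂ := by
    ext x
    · simpa using LinearMap.congr_fun hφ₁ x
    · simpa using LinearMap.congr_fun hφ₂ x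
  have hsurj : Function.Surjective (φ₁.coprod φ₂) := by
    refine LinearMap.range_eq_top.mp (eq_top_of_apply_mem_of_mem hT hv hw hbV hbW hlK ?_ ?_ ?_)
    · rintro _ ⟨z, rfl⟩
      exact ⟨_, LinearMap.congr_fun hψ z⟩
    · exact ⟨(0, x₂), by simp [hx₂]⟩
    · exact ⟨(x₁, 0), by simp [hx₁]⟩
  have := h₁.finiteDimensional
  have := h₂.finiteDimensional
  have := hV.finiteDimensional
  have := hW.finiteDimensional
  have hdim : finrank K (U₁ × U₂) = finrank K (V ⊗[K] W) := by
    rw [finrank_prod, finrank_tensorProduct, hV.1, hW.1, h₁.1, h₂.1]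
    omega
  exact ⟨φ₁.coprod φ₂,
    ⟨(LinearMap.injective_iff_surjective_of_finrank_eq_finrank hdim).mpr hsurj, hsurj⟩, hψ⟩

end TensorNilpotent

end TensorProduct

open scoped MonoidAlgebra

namespace Representation

variable {k G V W U₁ U₂ : Type*} [CommRing k] [Monoid G] [AddCommGroup V] [Module k V]
  [AddCommGroup W] [Module k W] [AddCommGroup U₁] [Module k U₁] [AddCommGroup U₂] [Module k U₂]

noncomputable def Equiv.asModuleLinearEquiv {ρ : Representation k G V}
    {σ : Representation k G W} (φ : ρ.Equiv σ) : ρ.asModule ≃ₗ[k[G]] σ.asModule :=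
  { IntertwiningMap.equivLinearMapAsModule ρ σ φ.toIntertwiningMap with
    invFun := φ.symm
    left_inv := φ.symm_apply_apply
    right_inv := φ.apply_symm_apply }

noncomputable def prodAsModuleEquiv (σ₁ : Representation k G U₁) (σ₂ : Representation k G U₂) :
    (σ₁.prod σ₂).asModule ≃ₗ[k[G]] σ₁.asModule × σ₂.asModule :=
  { (IntertwiningMap.equivLinearMapAsModule _ _ (IntertwiningMap.fst k σ₁ σ₂)).prod
      (IntertwiningMap.equivLinearMapAsModule _ _ (IntertwiningMap.snd k σ₁ σ₂)) with
    invFun := fun x => x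
    left_inv := fun _ => rfl
    right_inv := fun _ => rfl }

theorem comp_eq_comp_of_ofAdd_one {n : ℕ} [NeZero n]
    {ρ : Representation k (Multiplicative (ZMod n)) V}
    {σ : Representation k (Multiplicative (ZMod n)) W}
    (f : V →ₗ[k] W) (hf : f ∘ₗ ρ (.ofAdd 1) = σ (.ofAdd 1) ∘ₗ f) (g : Multiplicative (ZMod n)) :
    f ∘ₗ ρ g = σ g ∘ₗ f := by
  obtain ⟨m, rfl⟩ : ∃ m : ℕ, (.ofAdd 1 : Multiplicative (ZMod n)) ^ m = g :=
    ⟨g.toAdd.val, by rw [← ofAdd_nsmul, nsmul_one, ZMod.natCast_zmod_val]; rfl⟩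
  induction m with
  | zero => simp [Module.End.one_eq_id]
  | succ m ih => rw [pow_succ, map_mul, map_mul, Module.End.mul_eq_comp, Module.End.mul_eq_comp,
      ← LinearMap.comp_assoc, ih, LinearMap.comp_assoc, hf, LinearMap.comp_assoc]

end Representation

theorem stmt6_general (p : ℕ) (k : Type) [Field k] [CharP k p]
    (l : ℕ) (hl : 1 < l) (hlp : l < p)
    (V W U₁ U₂ : Type) [AddCommGroup V] [Module k V] [AddCommGroup W] [Module k W]
    [AddCommGroup U₁] [Module k U₁] [AddCommGroup U₂] [Module k U₂]
    (ρV : Representation k (Multiplicative (ZMod p)) V)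
    (ρW : Representation k (Multiplicative (ZMod p)) W)
    (σ₁ : Representation k (Multiplicative (ZMod p)) U₁)
    (σ₂ : Representation k (Multiplicative (ZMod p)) U₂)
    (hV : IsIndecCpRep p k 2 V ρV) (hW : IsIndecCpRep p k l W ρW)
    (h₁ : IsIndecCpRep p k (l - 1) U₁ σ₁) (h₂ : IsIndecCpRep p k (l + 1) U₂ σ₂) :
    Nonempty ((ρV.tprod ρW).asModule ≃ₗ[MonoidAlgebra k (Multiplicative (ZMod p))]
      (σ₁.asModule × σ₂.asModule)) := by
  have : NeZero p := ⟨by omega⟩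
  have hlk : (l : k) ≠ 0 := by
    rw [Ne, CharP.cast_eq_zero_iff k p]
    exact Nat.not_dvd_of_pos_of_lt (by omega) hlp
  obtain ⟨ψ, hbij, hψ⟩ := exists_bijective_comp_prodMap_eq (map_sub_one_tmul _ _) hl hlk hV hW h₁ h₂
  have hgen : ψ ∘ₗ (σ₁.prod σ₂) (.ofAdd 1) = ρV.tprod ρW (.ofAdd 1) ∘ₗ ψ := by
    have hprod : (σ₁.prod σ₂) (.ofAdd 1) - 1 = (σ₁ (.ofAdd 1) - 1).prodMap (σ₂ (.ofAdd 1) - 1) := by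
      ext <;> simp
    refine LinearMap.comp_eq_comp_of_comp_sub_one ?_
    rwa [hprod, Representation.tprod_apply]
  let φ : (σ₁.prod σ₂).IntertwiningMap (ρV.tprod ρW) :=
    ⟨ψ, Representation.comp_eq_comp_of_ofAdd_one ψ hgen⟩
  exact ⟨(φ.ofBijective hbij).symm.asModuleLinearEquiv.trans
    (Representation.prodAsModuleEquiv σ₁ σ₂)⟩

/-- for `1 < l < p`, `V₂ ⊗ V_l ≅ V_{l-1} ⊕ V_{l+1}` as `k[C_p]`-modules,
where `C_p` acts diagonally on the tensor product. -/
theorem stmt6 (p : ℕ) [Fact p.Prime] (k : Type) [Field k] [CharP k p]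
    (l : ℕ) (hl : 1 < l) (hlp : l < p)
    (V W U₁ U₂ : Type) [AddCommGroup V] [Module k V] [AddCommGroup W] [Module k W]
    [AddCommGroup U₁] [Module k U₁] [AddCommGroup U₂] [Module k U₂]
    (ρV : Representation k (Multiplicative (ZMod p)) V)
    (ρW : Representation k (Multiplicative (ZMod p)) W)
    (σ₁ : Representation k (Multiplicative (ZMod p)) U₁)
    (σ₂ : Representation k (Multiplicative (ZMod p)) U₂)
    (hV : IsIndecCpRep p k 2 V ρV) (hW : IsIndecCpRep p k l W ρW)
    (h₁ : IsIndecCpRep p k (l - 1) U₁ σ₁) (h₂ : IsIndecCpRep p k (l + 1) U₂ σ₂) :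
    Nonempty ((ρV.tprod ρW).asModule ≃ₗ[MonoidAlgebra k (Multiplicative (ZMod p))]
      (σ₁.asModule × σ₂.asModule)) :=
  stmt6_general p k l hl hlp V W U₁ U₂ ρV ρW σ₁ σ₂ hV hW h₁ h₂
end

section
/- In $\mathbb{Z}[\mu]/\Phi_{2p}(\mu)$ ($p$ odd prime, $\Phi_{2p}$ the $2p$-th cyclotomic polynomial), the complete homogeneous symmetric polynomials $h_i$ evaluated at the $p$ elements $\mu^p, \mu^{p-2}, \ldots, \mu^{2-p}$ vanish for $1 \le i \le p-1$. -/
/-!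
Multiplication by `μ²` permutes the `p` points `μ^(p - 2t)` cyclically, because `μ^(2p) = 1`.
As `h_i` is symmetric and homogeneous of degree `i`, this gives `h_i = μ^(2i) h_i`. For
`0 < 2i < 2p` the primitive root `μ` has `μ^(2i) ≠ 1`, and `ℤ[X]/Φ_{2p}` is a domain since
`Φ_{2p}` is irreducible, so `h_i = 0`.
-/

/-- `R = ℤ[μ]/Φ_{2p}(μ)`. -/
abbrev CycRing (p : ℕ) : Type :=
  Polynomial ℤ ⧸ Ideal.span {Polynomial.cyclotomic (2 * p) ℤ}

open Polynomial Finset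

section CompleteHomogeneous

variable {R : Type*} [CommRing R] {k : ℕ}

def completeHomogeneous (x : Fin k → R) (n : ℕ) : R :=
  ∑ d ∈ Nat.antidiagonalTuple k n, ∏ t, x t ^ d t

theorem completeHomogeneous_comp_perm (x : Fin k → R) (σ : Equiv.Perm (Fin k)) (n : ℕ) :
    completeHomogeneous (x ∘ σ) n = completeHomogeneous x n := by
  refine Finset.sum_equiv (σ.arrowCongr (Equiv.refl ℕ)) (fun d => ?_) (fun d _ => ?_)
  · simp only [Nat.mem_antidiagonalTuple, Equiv.arrowCongr_apply, Equiv.coe_refl,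
      Function.comp_apply, id_eq, Equiv.sum_comp]
  · simp only [Equiv.arrowCongr_apply, Equiv.coe_refl, Function.comp_apply, id_eq]
    rw [← Equiv.prod_comp σ fun t => x t ^ d (σ.symm t)]
    simp only [Equiv.symm_apply_apply]

theorem completeHomogeneous_const_mul (c : R) (x : Fin k → R) (n : ℕ) :
    completeHomogeneous (fun t => c * x t) n = c ^ n * completeHomogeneous x n := by
  rw [completeHomogeneous, completeHomogeneous, Finset.mul_sum]
  refine Finset.sum_congr rfl fun d hd => ?_
  simp only [mul_pow, Finset.prod_mul_distrib, Finset.prod_pow_eq_pow_sum,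
    Nat.mem_antidiagonalTuple.mp hd]

theorem completeHomogeneous_eq_zero_of_eq_const_mul_comp [IsDomain R] {x : Fin k → R}
    {σ : Equiv.Perm (Fin k)} {c : R} {n : ℕ} (hx : ∀ t, x t = c * x (σ t)) (hc : c ^ n ≠ 1) :
    completeHomogeneous x n = 0 := by
  have h : completeHomogeneous x n = c ^ n * completeHomogeneous x n := by
    conv_lhs => rw [show x = fun t => c * (x ∘ σ) t from funext hx]
    rw [completeHomogeneous_const_mul, completeHomogeneous_comp_perm]
  have : (1 - c ^ n) * completeHomogeneous x n = 0 := by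
    rw [sub_mul, one_mul, ← h, sub_self]
  exact (mul_eq_zero.mp this).resolve_left (sub_ne_zero.mpr hc.symm)

end CompleteHomogeneous

theorem zpow_sub_two_mul_eq_sq_mul_finRotate {G : Type*} [Group G] {g : G} {p : ℕ}
    (hg : g ^ (2 * p) = 1) (t : Fin p) :
    g ^ ((p : ℤ) - 2 * (t : ℕ)) = g ^ 2 * g ^ ((p : ℤ) - 2 * (finRotate p t : ℕ)) := by
  obtain ⟨n, rfl⟩ : ∃ n, p = n + 1 := Nat.exists_eq_add_one.mpr t.pos
  rw [← zpow_natCast g 2, ← zpow_add, coe_finRotate]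
  split_ifs with ht
  · have h2p : g ^ (2 * ((n + 1 : ℕ) : ℤ)) = 1 := by exact_mod_cast hg
    rw [ht, Fin.val_last, ← mul_one (g ^ (_ : ℤ)), ← h2p, ← zpow_add]
    congr 1
    push_cast
    ring
  · congr 1
    push_cast
    ring

section CyclotomicQuotient

variable {n : ℕ}

theorem isPrimitiveRoot_mk_X (hn : 0 < n) :
    IsPrimitiveRoot (Ideal.Quotient.mk (Ideal.span {cyclotomic n ℤ}) X) n := by
  set μ := Ideal.Quotient.mk (Ideal.span {cyclotomic n ℤ}) X
  have hμ : μ ^ n = 1 := by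
    rw [← sub_eq_zero, ← map_pow, ← map_one (Ideal.Quotient.mk _), ← map_sub,
      Ideal.Quotient.eq_zero_iff_mem, Ideal.mem_span_singleton]
    exact cyclotomic.dvd_X_pow_sub_one n ℤ
  set ζ := Complex.exp (2 * Real.pi * Complex.I / n)
  have hζ : IsPrimitiveRoot ζ n := Complex.isPrimitiveRoot_exp n hn.ne'
  -- Sending `X` to a primitive `n`-th root of unity in `ℂ` shows that `n` divides the order of `μ`.
  let φ : (ℤ[X] ⧸ Ideal.span {cyclotomic n ℤ}) →+* ℂ :=
    Ideal.Quotient.lift _ (eval₂RingHom (Int.castRingHom ℂ) ζ) fun a ha => by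
      obtain ⟨b, rfl⟩ := Ideal.mem_span_singleton'.mp ha
      simp [eval₂_eq_eval_map, (hζ.isRoot_cyclotomic hn).eq_zero]
  have hφ : φ μ = ζ := by simp [φ, μ]
  rw [IsPrimitiveRoot.iff_orderOf]
  refine Nat.dvd_antisymm (orderOf_dvd_of_pow_eq_one hμ) ?_
  have h := orderOf_map_dvd φ.toMonoidHom μ
  rwa [RingHom.toMonoidHom_eq_coe, MonoidHom.coe_coe, hφ, ← hζ.eq_orderOf] at h

instance isDomain_quotient_span_cyclotomic [NeZero n] :
    IsDomain (ℤ[X] ⧸ Ideal.span {cyclotomic n ℤ}) :=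
  have hirr := cyclotomic.irreducible (Nat.pos_of_neZero n)
  have := (Ideal.span_singleton_prime hirr.ne_zero).mpr hirr.prime
  Ideal.Quotient.isDomain _

end CyclotomicQuotient

theorem stmt11_general (p : ℕ) [Fact p.Prime] :
    ∃ u : (CycRing p)ˣ,
      (u : CycRing p) = Ideal.Quotient.mk _ (Polynomial.X : Polynomial ℤ) ∧
      ∀ i : ℕ, 1 ≤ i → i ≤ p - 1 →
        (∑ d ∈ Finset.Nat.antidiagonalTuple p i,
          ∏ t : Fin p,
            ((u ^ ((p : ℤ) - 2 * (t : ℤ)) : (CycRing p)ˣ) : CycRing p) ^ d t) = 0 := by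
  have h2p : 0 < 2 * p := Nat.mul_pos two_pos (Fact.out : p.Prime).pos
  have : NeZero (2 * p) := ⟨h2p.ne'⟩
  have hμ := isPrimitiveRoot_mk_X h2p
  set u := (hμ.isUnit h2p.ne').unit
  refine ⟨u, IsUnit.unit_spec _, fun i hi1 hi2 => ?_⟩
  refine completeHomogeneous_eq_zero_of_eq_const_mul_comp (σ := finRotate p) (fun t => ?_)
    (c := (u : CycRing p) ^ 2) ?_
  · have := congrArg Units.val
      (zpow_sub_two_mul_eq_sq_mul_finRotate (hμ.isUnit_unit h2p.ne').pow_eq_one t)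
    simpa only [Units.val_mul, Units.val_pow_eq_pow_val] using this
  · rw [← pow_mul, IsUnit.unit_spec]
    exact hμ.pow_ne_one_of_pos_of_lt (by omega) (by omega)

/-- in `ℤ[μ]/Φ_{2p}(μ)` (`p` an odd prime), the complete homogeneous
symmetric polynomials `h_i` (in `p` variables) evaluated at the `p` elements
`μ^p, μ^{p-2}, …, μ^{2-p}` vanish for `1 ≤ i ≤ p - 1`.  Here
`h_i(x) = ∑_{d : Fin p → ℕ, ∑ d = i} ∏_t x_t ^ d_t`. -/
theorem stmt11 (p : ℕ) [Fact p.Prime] (hp : Odd p) :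
    ∃ u : (CycRing p)ˣ,
      (u : CycRing p) = Ideal.Quotient.mk _ (Polynomial.X : Polynomial ℤ) ∧
      ∀ i : ℕ, 1 ≤ i → i ≤ p - 1 →
        (∑ d ∈ Finset.Nat.antidiagonalTuple p i,
          ∏ t : Fin p,
            ((u ^ ((p : ℤ) - 2 * (t : ℤ)) : (CycRing p)ˣ) : CycRing p) ^ d t) = 0 :=
  stmt11_general p
end
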